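/- For every sign vector ε, every 1 ≤ i ≤ n and every 1 ≤ j ≤ n+1 (n ≥ 1), the face F^ε_{i,j} is empty if and only if (i = 1 and j = 1) or (i = n and j = n+1). -/

import Mathlib

noncomputable section

open Set

/-- The brick `Y^ε_i ⊆ S^n` (coordinate indices are 0-based, so the 1-based
condition `k ≤ i` becomes `(k : ℕ) < i`, and `k ≥ i+1` becomes `i ≤ (k : ℕ)`). -/
def Ybrick (n : ℕ) (ε : Fin (n + 1) → ℝ) (i : ℕ) : Set (EuclideanSpace ℝ (Fin (n + 1))) :=
  {v | ‖v‖ = 1 ∧ (∀ k, 0 ≤ ε k * v k) ∧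
    (∃ k : Fin (n + 1), (k : ℕ) < i ∧ v k ≠ 0) ∧
    (∃ k : Fin (n + 1), i ≤ (k : ℕ) ∧ v k ≠ 0)}

/-- The `j`-th face `F^ε_{i,j}` of `Y^ε_i` (here `j : Fin (n+1)` is the 0-based
index of the 1-based coordinate `j+1`). -/
def Fface (n : ℕ) (ε : Fin (n + 1) → ℝ) (i : ℕ) (j : Fin (n + 1)) :
    Set (EuclideanSpace ℝ (Fin (n + 1))) :=
  {v ∈ Ybrick n ε i | v j = 0}

/-! A point of `Y^ε_i` needs a nonzero coordinate below `i` and one at or above `i`; the face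
`v_j = 0` is nonempty exactly when both can be chosen different from `j`, and then the normalized
sum of the two corresponding signed basis vectors lies on it. The two index conditions fail only
in the two corner cases of the statement. -/

theorem exists_norm_eq_one_orthant_support_pair {ι : Type*} [Fintype ι] [DecidableEq ι]
    (ε : ι → ℝ) (a b : ι) :
    ∃ v : EuclideanSpace ℝ ι, ‖v‖ = 1 ∧ (∀ k, 0 ≤ ε k * v k) ∧ v a ≠ 0 ∧ v b ≠ 0 ∧
      ∀ k, k ≠ a → k ≠ b → v k = 0 := by
  set u : EuclideanSpace ℝ ι :=
    WithLp.toLp 2 fun k => if k = a ∨ k = b then (if ε k < 0 then -1 else 1) else 0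
  have hu_ne : ∀ k, k = a ∨ k = b → u k ≠ 0 := fun k hk => by
    simp only [u, if_pos hk]
    split_ifs <;> norm_num
  have hu : u ≠ 0 := fun h => hu_ne a (.inl rfl) (by rw [h]; rfl)
  have hc : 0 < ‖u‖⁻¹ := inv_pos.2 (norm_pos_iff.2 hu)
  refine ⟨‖u‖⁻¹ • u, norm_smul_inv_norm hu, fun k => ?_, ?_, ?_, fun k hka hkb => ?_⟩
  · rw [PiLp.smul_apply, smul_eq_mul, mul_left_comm]
    refine mul_nonneg hc.le ?_
    simp only [u]
    split_ifs <;> nlinarith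
  · exact smul_ne_zero hc.ne' (hu_ne a (.inl rfl))
  · exact smul_ne_zero hc.ne' (hu_ne b (.inr rfl))
  · simp [u, hka, hkb]

variable {n : ℕ} {ε : Fin (n + 1) → ℝ} {i : ℕ} {j : Fin (n + 1)}

theorem Fface_nonempty_iff :
    (Fface n ε i j).Nonempty ↔
      (∃ a : Fin (n + 1), (a : ℕ) < i ∧ a ≠ j) ∧ ∃ b : Fin (n + 1), i ≤ (b : ℕ) ∧ b ≠ j := by
  constructor
  · rintro ⟨v, ⟨-, -, ⟨a, ha, hva⟩, ⟨b, hb, hvb⟩⟩, hvj⟩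
    exact ⟨⟨a, ha, fun h => hva (h ▸ hvj)⟩, ⟨b, hb, fun h => hvb (h ▸ hvj)⟩⟩
  · rintro ⟨⟨a, ha, haj⟩, ⟨b, hb, hbj⟩⟩
    obtain ⟨v, hv1, hvε, hva, hvb, hv0⟩ := exists_norm_eq_one_orthant_support_pair ε a b
    exact ⟨v, ⟨hv1, hvε, ⟨a, ha, hva⟩, ⟨b, hb, hvb⟩⟩, hv0 j haj.symm hbj.symm⟩

theorem exists_fin_lt_ne_iff (hi1 : 1 ≤ i) (hin : i ≤ n + 1) :
    (∃ a : Fin (n + 1), (a : ℕ) < i ∧ a ≠ j) ↔ ¬(i = 1 ∧ (j : ℕ) = 0) := by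
  constructor
  · rintro ⟨a, ha, haj⟩ ⟨rfl, hj⟩
    exact haj (Fin.ext (by omega))
  · intro h
    by_cases hj : (j : ℕ) = 0
    · exact ⟨⟨1, by omega⟩, show 1 < i by omega, fun h' => by rw [← h'] at hj; simp at hj⟩
    · exact ⟨0, show 0 < i by omega, fun h' => hj (by rw [← h']; rfl)⟩

theorem exists_fin_ge_ne_iff (hin : i ≤ n) :
    (∃ b : Fin (n + 1), i ≤ (b : ℕ) ∧ b ≠ j) ↔ ¬(i = n ∧ (j : ℕ) = n) := by
  constructor
  · rintro ⟨b, hb, hbj⟩ ⟨rfl, hj⟩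
    exact hbj (Fin.ext (by omega))
  · intro h
    by_cases hj : (j : ℕ) = i
    · exact ⟨⟨i + 1, by omega⟩, by simp, fun h' => by rw [← h'] at hj; simp at hj⟩
    · exact ⟨⟨i, by omega⟩, le_rfl, fun h' => hj (by rw [← h'])⟩

theorem Fface_eq_empty_iff (n : ℕ) (ε : Fin (n + 1) → ℝ) (i : ℕ) (hi1 : 1 ≤ i) (hin : i ≤ n)
    (j : Fin (n + 1)) :
    Fface n ε i j = ∅ ↔ (i = 1 ∧ (j : ℕ) = 0) ∨ (i = n ∧ (j : ℕ) = n) := by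
  rw [← not_nonempty_iff_eq_empty, Fface_nonempty_iff, exists_fin_lt_ne_iff hi1 (by omega),
    exists_fin_ge_ne_iff hin]
  tauto
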